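/- Uniform moment bounds: under the stated drift hypotheses, assuming additionally that X_n ≥ 0 almost surely for all n, for every r > 0 there exists a constant c* = c*(r, ε, K, k, x₀) < ∞ such that E[(X_n)^r] ≤ c* for all n ∈ ℕ. -/

import Mathlib

/-! The Lyapunov function `exp (η x)` contracts on average above level `K`: bounding `exp` by its
second-order Taylor polynomial and using the drift gives
`E[exp (η X_{n+1})] ≤ ρ E[exp (η X_n)] + exp (η (K + k))` with `ρ < 1`, so the exponential moments
are bounded uniformly in `n`. Every polynomial moment of the nonnegative `X_n` is dominated by an
exponential one, since `x ^ r ≤ (r / η) ^ r * exp (η x)`. -/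

open MeasureTheory Filter Real

lemma exp_sub_one_sub_eq_tsum (x : ℝ) :
    exp x - 1 - x = ∑' n : ℕ, x ^ (n + 2) / (n + 2).factorial := by
  rw [exp_eq_exp_ℝ, congrFun NormedSpace.exp_eq_tsum_div x,
    ← (summable_pow_div_factorial x).sum_add_tsum_nat_add 2]
  simp only [Finset.sum_range_succ, Finset.range_one, Finset.sum_singleton, pow_zero,
    Nat.factorial_zero, Nat.cast_one, div_one, pow_one, Nat.factorial_one]
  ring

theorem exp_mul_le_one_add_mul_add_sq_mul {a b k z : ℝ} (ha : 0 < a) (hab : a ≤ b)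
    (hz : |z| ≤ k) :
    exp (a * z) ≤ 1 + a * z + a ^ 2 * ((exp (b * k) - 1 - b * k) / b ^ 2) := by
  have hb : 0 < b := ha.trans_le hab
  have hterm (n : ℕ) : (a * z) ^ (n + 2) / (n + 2).factorial
      ≤ a ^ 2 / b ^ 2 * ((b * k) ^ (n + 2) / (n + 2).factorial) := by
    have hpow : (a * z) ^ (n + 2) ≤ a ^ 2 / b ^ 2 * (b * k) ^ (n + 2) :=
      calc (a * z) ^ (n + 2) ≤ |a * z| ^ (n + 2) := (le_abs_self _).trans (abs_pow _ _).le
        _ ≤ (a * k) ^ (n + 2) := by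
          gcongr
          rw [abs_mul, abs_of_pos ha]
          gcongr
        _ = a ^ 2 * a ^ n * k ^ (n + 2) := by ring
        _ ≤ a ^ 2 * b ^ n * k ^ (n + 2) := by
          have : 0 ≤ k := (abs_nonneg z).trans hz
          gcongr
        _ = a ^ 2 / b ^ 2 * (b * k) ^ (n + 2) := by field_simp; ring
    rw [mul_div_assoc']
    gcongr
  have hsum (x : ℝ) : Summable fun n : ℕ => x ^ (n + 2) / (n + 2).factorial :=
    (summable_nat_add_iff 2).mpr (summable_pow_div_factorial x)
  have htsum := (hsum (a * z)).tsum_le_tsum hterm ((hsum (b * k)).mul_left _)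
  rw [tsum_mul_left, ← exp_sub_one_sub_eq_tsum, ← exp_sub_one_sub_eq_tsum] at htsum
  have : a ^ 2 * ((exp (b * k) - 1 - b * k) / b ^ 2)
      = a ^ 2 / b ^ 2 * (exp (b * k) - 1 - b * k) := by ring
  linarith

theorem rpow_le_mul_exp {x r η : ℝ} (hx : 0 ≤ x) (hr : 0 < r) (hη : 0 < η) :
    x ^ r ≤ (r / η) ^ r * exp (η * x) := by
  have hy : 0 ≤ η * x / r := by positivity
  calc x ^ r = (r / η * (η * x / r)) ^ r := by congr 1; field_simp
    _ = (r / η) ^ r * (η * x / r) ^ r := mul_rpow (by positivity) hy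
    _ ≤ (r / η) ^ r * exp (η * x / r) ^ r := by
        gcongr
        linarith [add_one_le_exp (η * x / r)]
    _ = (r / η) ^ r * exp (η * x) := by rw [← exp_mul, div_mul_cancel₀ _ hr.ne']

theorem le_max_div_one_sub_of_le_mul_add {a : ℕ → ℝ} {ρ B : ℝ} (hρ0 : 0 ≤ ρ) (hρ1 : ρ < 1)
    (h : ∀ n, a (n + 1) ≤ ρ * a n + B) (n : ℕ) : a n ≤ max (a 0) (B / (1 - ρ)) := by
  induction n with
  | zero => exact le_max_left _ _
  | succ n ih =>
    have hB : B ≤ (1 - ρ) * max (a 0) (B / (1 - ρ)) := by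
      rw [← div_le_iff₀' (by linarith)]
      exact le_max_right _ _
    linarith [h n, mul_le_mul_of_nonneg_left ih hρ0]

section
variable {Ω : Type*} {m m0 : MeasurableSpace Ω} {μ : Measure Ω}

theorem integral_rpow_le_of_integrable_exp {f : Ω → ℝ} (hf : AEStronglyMeasurable f μ)
    (hf0 : 0 ≤ᵐ[μ] f) {r η : ℝ} (hr : 0 < r) (hη : 0 < η)
    (hexp : Integrable (fun ω => exp (η * f ω)) μ) :
    Integrable (fun ω => f ω ^ r) μ ∧
      ∫ ω, f ω ^ r ∂μ ≤ (r / η) ^ r * ∫ ω, exp (η * f ω) ∂μ := by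
  have hdom : ∀ᵐ ω ∂μ, f ω ^ r ≤ (r / η) ^ r * exp (η * f ω) := by
    filter_upwards [hf0] with ω h using rpow_le_mul_exp h hr hη
  have hint : Integrable (fun ω => f ω ^ r) μ := by
    refine (hexp.const_mul ((r / η) ^ r)).mono'
      ((continuous_rpow_const hr.le).comp_aestronglyMeasurable hf) ?_
    filter_upwards [hf0, hdom] with ω h hle
    rwa [norm_of_nonneg (rpow_nonneg h r)]
  refine ⟨hint, ?_⟩
  rw [← integral_const_mul]
  exact integral_mono_ae hint (hexp.const_mul _) hdom

theorem condExp_exp_mul_le [IsFiniteMeasure μ] (hm : m ≤ m0) {Δ : Ω → ℝ} {η q k : ℝ}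
    (hΔ : Integrable Δ μ) (hΔk : ∀ᵐ ω ∂μ, |Δ ω| ≤ k)
    (hquad : ∀ z, |z| ≤ k → exp (η * z) ≤ 1 + η * z + q) :
    μ[fun ω => exp (η * Δ ω) | m] ≤ᵐ[μ] fun ω => 1 + η * μ[Δ | m] ω + q := by
  have hdom : Integrable (fun ω => 1 + η * Δ ω + q) μ :=
    ((integrable_const 1).add (hΔ.const_mul η)).add (integrable_const q)
  have hle : (fun ω => exp (η * Δ ω)) ≤ᵐ[μ] fun ω => 1 + η * Δ ω + q := by
    filter_upwards [hΔk] with ω h using hquad _ h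
  have hint : Integrable (fun ω => exp (η * Δ ω)) μ := by
    refine hdom.mono' (continuous_exp.comp_aestronglyMeasurable (hΔ.1.const_mul η)) ?_
    filter_upwards [hle] with ω h
    rwa [norm_of_nonneg (exp_pos _).le]
  have hlin : μ[fun ω => 1 + η * Δ ω + q | m] =ᵐ[μ] fun ω => 1 + η * μ[Δ | m] ω + q := by
    have : (fun ω => 1 + η * Δ ω + q) = η • Δ + fun _ => 1 + q := by
      ext
      simp only [Pi.add_apply, Pi.smul_apply, smul_eq_mul]
      ring
    rw [this]
    filter_upwards [condExp_add (hΔ.smul η) (integrable_const _) m, condExp_smul η Δ m]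
      with ω hadd hsmul
    rw [hadd, Pi.add_apply, hsmul, condExp_const hm]
    simp only [Pi.smul_apply, smul_eq_mul]
    ring
  exact (condExp_mono hint hdom hle).trans hlin.le

theorem Integrable.exp_mul_of_abs_sub_le {x x' : Ω → ℝ} {η k : ℝ}
    (hx' : AEStronglyMeasurable x' μ) (hint : Integrable (fun ω => exp (η * x ω)) μ)
    (hk : ∀ᵐ ω ∂μ, |x' ω - x ω| ≤ k) : Integrable (fun ω => exp (η * x' ω)) μ := by
  refine (hint.const_mul (exp (|η| * k))).mono'
    (continuous_exp.comp_aestronglyMeasurable (hx'.const_mul η)) ?_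
  filter_upwards [hk] with ω h
  rw [norm_of_nonneg (exp_pos _).le, ← exp_add, exp_le_exp]
  have : η * (x' ω - x ω) ≤ |η| * k :=
    (le_abs_self _).trans (abs_mul η _ ▸ mul_le_mul_of_nonneg_left h (abs_nonneg η))
  linarith

theorem integral_exp_mul_le_of_drift [IsProbabilityMeasure μ] (hm : m ≤ m0) {x x' : Ω → ℝ}
    (hx : Measurable[m] x) (hx' : AEStronglyMeasurable x' μ) {η q k ε K ρ : ℝ}
    (hη : 0 ≤ η) (hquad : ∀ z, |z| ≤ k → exp (η * z) ≤ 1 + η * z + q)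
    (hρ : 1 - η * ε + q ≤ ρ) (hρ0 : 0 ≤ ρ) (hk : ∀ᵐ ω ∂μ, |x' ω - x ω| ≤ k)
    (hdrift : ∀ᵐ ω ∂μ, K ≤ x ω → μ[fun ω' => x' ω' - x ω' | m] ω ≤ -ε)
    (hint : Integrable (fun ω => exp (η * x ω)) μ)
    (hint' : Integrable (fun ω => exp (η * x' ω)) μ) :
    ∫ ω, exp (η * x' ω) ∂μ ≤ ρ * ∫ ω, exp (η * x ω) ∂μ + exp (η * (K + k)) := by
  set Δ : Ω → ℝ := fun ω => x' ω - x ω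
  set G := μ[fun ω => exp (η * Δ ω) | m]
  have hΔ : Integrable Δ μ :=
    .of_bound (hx'.sub (hx.mono hm le_rfl).aestronglyMeasurable) k
      (by simpa only [norm_eq_abs] using hk)
  have hg_le : ∀ᵐ ω ∂μ, exp (η * Δ ω) ≤ exp (η * k) := by
    filter_upwards [hk] with ω h
    gcongr
    exact (le_abs_self _).trans h
  have hg : Integrable (fun ω => exp (η * Δ ω)) μ := by
    refine .of_bound (continuous_exp.comp_aestronglyMeasurable (hΔ.1.const_mul η))
      (exp (η * k)) ?_
    filter_upwards [hg_le] with ω h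
    rwa [norm_of_nonneg (exp_pos _).le]
  have hsplit : (fun ω => exp (η * x' ω))
      = (fun ω => exp (η * x ω)) * fun ω => exp (η * Δ ω) := by
    ext ω
    simp only [Pi.mul_apply, Δ, ← exp_add]
    ring_nf
  have hpull : μ[fun ω => exp (η * x' ω) | m] =ᵐ[μ] fun ω => exp (η * x ω) * G ω := by
    rw [hsplit]
    exact condExp_mul_of_stronglyMeasurable_left
      (hx.const_mul η).exp.stronglyMeasurable (hsplit ▸ hint') hg
  have hG_quad := condExp_exp_mul_le hm hΔ hk hquad
  have hG_le : G ≤ᵐ[μ] fun _ => exp (η * k) := by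
    simpa only [condExp_const hm] using condExp_mono (m := m) hg (integrable_const _) hg_le
  have hG_nonneg : 0 ≤ᵐ[μ] G := condExp_nonneg (ae_of_all _ fun ω => (exp_pos _).le)
  have hpoint : ∀ᵐ ω ∂μ, exp (η * x ω) * G ω ≤ ρ * exp (η * x ω) + exp (η * (K + k)) := by
    filter_upwards [hG_quad, hG_le, hG_nonneg, hdrift] with ω hquadω hleω hnonneg hdriftω
    have hY := exp_pos (η * x ω)
    by_cases hK : K ≤ x ω
    · have : G ω ≤ ρ := by nlinarith [mul_le_mul_of_nonneg_left (hdriftω hK) hη]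
      nlinarith [exp_pos (η * (K + k))]
    · have hYK : exp (η * x ω) ≤ exp (η * K) := by gcongr; linarith
      rw [mul_add, exp_add]
      nlinarith [mul_le_mul hYK hleω hnonneg (exp_pos _).le]
  calc ∫ ω, exp (η * x' ω) ∂μ = ∫ ω, exp (η * x ω) * G ω ∂μ := by
        rw [← integral_condExp hm]
        exact integral_congr_ae hpull
    _ ≤ ∫ ω, (ρ * exp (η * x ω) + exp (η * (K + k))) ∂μ :=
        integral_mono_ae (integrable_condExp.congr hpull)
          ((hint.const_mul ρ).add (integrable_const _)) hpoint
    _ = ρ * ∫ ω, exp (η * x ω) ∂μ + exp (η * (K + k)) := by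
        rw [integral_add (hint.const_mul ρ) (integrable_const _), integral_const_mul,
          integral_const, probReal_univ, one_smul]

variable {X : ℕ → Ω → ℝ} {x0 k : ℝ}

theorem integrable_exp_mul_of_bounded_increments [IsFiniteMeasure μ]
    (hX : ∀ n, AEStronglyMeasurable (X n) μ)
    (hX0 : ∀ᵐ ω ∂μ, X 0 ω = x0) (hbdd : ∀ n, ∀ᵐ ω ∂μ, |X (n + 1) ω - X n ω| ≤ k) (η : ℝ)
    (n : ℕ) : Integrable (fun ω => exp (η * X n ω)) μ := by
  induction n with
  | zero =>
    exact (integrable_const (exp (η * x0))).congr (by filter_upwards [hX0] with ω h; rw [h])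
  | succ n ih => exact Integrable.exp_mul_of_abs_sub_le (hX (n + 1)) ih (hbdd n)

theorem integral_exp_mul_le_max [IsProbabilityMeasure μ] {ℱ : Filtration ℕ m0} (hadp : Adapted ℱ X)
    (hX0 : ∀ᵐ ω ∂μ, X 0 ω = x0) {η q ε K ρ : ℝ} (hη : 0 ≤ η)
    (hquad : ∀ z, |z| ≤ k → exp (η * z) ≤ 1 + η * z + q)
    (hρ : 1 - η * ε + q ≤ ρ) (hρ0 : 0 ≤ ρ) (hρ1 : ρ < 1)
    (hbdd : ∀ n, ∀ᵐ ω ∂μ, |X (n + 1) ω - X n ω| ≤ k)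
    (hdrift : ∀ n, ∀ᵐ ω ∂μ, K ≤ X n ω → μ[fun ω' => X (n + 1) ω' - X n ω' | ℱ n] ω ≤ -ε)
    (hint : ∀ n, Integrable (fun ω => exp (η * X n ω)) μ) (n : ℕ) :
    ∫ ω, exp (η * X n ω) ∂μ ≤ max (exp (η * x0)) (exp (η * (K + k)) / (1 - ρ)) := by
  have h0 : ∫ ω, exp (η * X 0 ω) ∂μ = exp (η * x0) := by
    rw [integral_congr_ae (by filter_upwards [hX0] with ω h; rw [h]), integral_const,
      probReal_univ, one_smul]
  rw [← h0]
  refine le_max_div_one_sub_of_le_mul_add (a := fun n => ∫ ω, exp (η * X n ω) ∂μ) hρ0 hρ1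
    (fun n => ?_) n
  exact integral_exp_mul_le_of_drift (ℱ.le n) (hadp n)
    ((hadp (n + 1)).mono (ℱ.le (n + 1)) le_rfl).aestronglyMeasurable hη hquad hρ hρ0 (hbdd n)
    (hdrift n) (hint n) (hint (n + 1))

end

theorem stmt_8_general
    {Ω : Type*} {m0 : MeasurableSpace Ω} {μ : Measure Ω} [IsProbabilityMeasure μ]
    (ℱ : Filtration ℕ m0) (X : ℕ → Ω → ℝ) (hadp : Adapted ℱ X)
    (x0 : ℝ) (hX0 : ∀ᵐ ω ∂μ, X 0 ω = x0)
    (k ε K : ℝ) (hε0 : 0 < ε) (hεk : ε ≤ k)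
    (hbdd : ∀ n : ℕ, ∀ᵐ ω ∂μ, |X (n + 1) ω - X n ω| ≤ k)
    (hdrift : ∀ n : ℕ, ∀ᵐ ω ∂μ, K ≤ X n ω →
      (μ[(fun ω' => X (n + 1) ω' - X n ω') | ℱ n]) ω ≤ -ε)
    (lam : ℝ)
    (c η ρ : ℝ)
    (hc : c = (Real.exp (lam * k) - 1 - lam * k) / lam ^ 2)
    (hη0 : 0 < η) (hηlt : η < min lam (ε / (2 * c)))
    (hρ : ρ = 1 - η * ε / 2)
    (hpos : ∀ n : ℕ, ∀ᵐ ω ∂μ, 0 ≤ X n ω) :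
    ∀ r : ℝ, 0 < r →
      ∃ cstar : ℝ,
        (∀ n : ℕ, Integrable (fun ω => X n ω ^ r) μ) ∧
        (∀ n : ℕ, ∫ ω, X n ω ^ r ∂μ ≤ cstar) := by
  intro r hr
  obtain ⟨hηlam, hηc⟩ := lt_min_iff.mp hηlt
  have hk : 0 < k := hε0.trans_le hεk
  have hck : k ^ 2 / 2 ≤ c := by
    rw [hc, le_div_iff₀ (by nlinarith)]
    nlinarith [quadratic_le_exp_of_nonneg (by nlinarith : 0 ≤ lam * k)]
  have h2ηc : η * (2 * c) < ε := (lt_div_iff₀ (by nlinarith)).mp hηc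
  have hρ0 : 0 ≤ ρ := by
    -- `η k² ≤ 2 η c < ε ≤ k`, hence `η ε ≤ η k < 1`
    have : η * k < 1 := by nlinarith
    rw [hρ]
    nlinarith
  have hρ1 : ρ < 1 := by rw [hρ]; nlinarith
  have hρq : 1 - η * ε + η ^ 2 * c ≤ ρ := by rw [hρ]; nlinarith
  have hquad (z : ℝ) (hz : |z| ≤ k) : exp (η * z) ≤ 1 + η * z + η ^ 2 * c :=
    hc ▸ exp_mul_le_one_add_mul_add_sq_mul hη0 hηlam.le hz
  have hX n : AEStronglyMeasurable (X n) μ :=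
    ((hadp n).mono (ℱ.le n) le_rfl).aestronglyMeasurable
  have hint := integrable_exp_mul_of_bounded_increments hX hX0 hbdd η
  have hmoment n := integral_rpow_le_of_integrable_exp (hX n) (hpos n) hr hη0 (hint n)
  refine ⟨(r / η) ^ r * max (exp (η * x0)) (exp (η * (K + k)) / (1 - ρ)),
    fun n => (hmoment n).1, fun n => (hmoment n).2.trans ?_⟩
  gcongr
  exact integral_exp_mul_le_max hadp hX0 hη0.le hquad hρq hρ0 hρ1 hbdd hdrift hint n

theorem stmt_8
    {Ω : Type*} {m0 : MeasurableSpace Ω} {μ : Measure Ω} [IsProbabilityMeasure μ]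
    (ℱ : Filtration ℕ m0) (X : ℕ → Ω → ℝ) (hadp : Adapted ℱ X)
    (x0 : ℝ) (hX0 : ∀ᵐ ω ∂μ, X 0 ω = x0)
    (k ε K : ℝ) (hk : 0 < k) (hε0 : 0 < ε) (hεk : ε ≤ k)
    (hbdd : ∀ n : ℕ, ∀ᵐ ω ∂μ, |X (n + 1) ω - X n ω| ≤ k)
    (hdrift : ∀ n : ℕ, ∀ᵐ ω ∂μ, K ≤ X n ω →
      (μ[(fun ω' => X (n + 1) ω' - X n ω') | ℱ n]) ω ≤ -ε)
    (lam : ℝ) (hlam : 0 < lam)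
    (c η ρ D : ℝ)
    (hc : c = (Real.exp (lam * k) - 1 - lam * k) / lam ^ 2)
    (hη0 : 0 < η) (hηlt : η < min lam (ε / (2 * c)))
    (hρ : ρ = 1 - η * ε / 2)
    (hD : D = Real.exp (lam * k))
    (hpos : ∀ n : ℕ, ∀ᵐ ω ∂μ, 0 ≤ X n ω) :
    ∀ r : ℝ, 0 < r →
      ∃ cstar : ℝ,
        (∀ n : ℕ, Integrable (fun ω => X n ω ^ r) μ) ∧
        (∀ n : ℕ, ∫ ω, X n ω ^ r ∂μ ≤ cstar) :=
  stmt_8_general ℱ X hadp x0 hX0 k ε K hε0 hεk hbdd hdrift lam c η ρ hc hη0 hηlt hρ hpos
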